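/- Define sequences $P_n, Q_n, R_n$ by the common recursion $X_n = (1-q-q^2)X_{n-1} + (q^{2n}-q^3+q^2+q)X_{n-2} + q^3 X_{n-3}$ with initial conditions $P_0=1, P_1=1-q, P_2=1-q+q^2+q^4$; $Q_0=1, Q_1=1, Q_2=1+q^4$; $R_0=1, R_1=1+q^2, R_2=1+q^2-q^3$. Then for all integers $m \ge 0$, the $3\times 3$ determinant $\det\begin{pmatrix} P_{m-1+1} & Q_{m} & R_{m} \\ P_{m+1} & Q_{m+1} & R_{m+1} \\ P_{m+2} & Q_{m+2} & R_{m+2} \end{pmatrix}$ satisfies $\det\begin{pmatrix} P_{m} & Q_{m} & R_{m} \\ P_{m+1} & Q_{m+1} & R_{m+1} \\ P_{m+2} & Q_{m+2} & R_{m+2} \end{pmatrix} = -q^{3m+5}$; equivalently, $\det\begin{pmatrix} P_{m-1} & Q_{m-1} & R_{m-1} \\ P_{m} & Q_{m} & R_{m} \\ P_{m+1} & Q_{m+1} & R_{m+1} \end{pmatrix} = -q^{3m+2}$ for all $m \ge 1$. -/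

import Mathlib

/-!
The three sequences satisfy one third-order recursion whose last coefficient is the constant
`q ^ 3`. Row-reducing the Casoratian determinant with the recursion therefore multiplies it by
`q ^ 3` at each step (the cyclic row permutation involved is even), so it equals `q ^ (3 * m)`
times its value `-q ^ 5` at `m = 0`, which is read off the initial conditions.
-/

section Casoratian

variable {R : Type*} [CommRing R]

def casoratian (x y z : ℕ → R) (n : ℕ) : R :=
  Matrix.det !![x n, y n, z n;
                x (n + 1), y (n + 1), z (n + 1);
                x (n + 2), y (n + 2), z (n + 2)]

theorem casoratian_eq (x y z : ℕ → R) (n : ℕ) :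
    casoratian x y z n =
      x n * y (n + 1) * z (n + 2) - x n * z (n + 1) * y (n + 2)
      - y n * x (n + 1) * z (n + 2) + y n * z (n + 1) * x (n + 2)
      + z n * x (n + 1) * y (n + 2) - z n * y (n + 1) * x (n + 2) := by
  simp [casoratian, Matrix.det_fin_three]

theorem casoratian_succ {a b c : ℕ → R} {x y z : ℕ → R}
    (hx : ∀ n, x (n + 3) = a n * x (n + 2) + b n * x (n + 1) + c n * x n)
    (hy : ∀ n, y (n + 3) = a n * y (n + 2) + b n * y (n + 1) + c n * y n)
    (hz : ∀ n, z (n + 3) = a n * z (n + 2) + b n * z (n + 1) + c n * z n) (n : ℕ) :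
    casoratian x y z (n + 1) = c n * casoratian x y z n := by
  simp only [casoratian_eq]
  rw [hx, hy, hz]
  ring

theorem casoratian_eq_pow_mul {c : R} {a b : ℕ → R} {x y z : ℕ → R}
    (hx : ∀ n, x (n + 3) = a n * x (n + 2) + b n * x (n + 1) + c * x n)
    (hy : ∀ n, y (n + 3) = a n * y (n + 2) + b n * y (n + 1) + c * y n)
    (hz : ∀ n, z (n + 3) = a n * z (n + 2) + b n * z (n + 1) + c * z n) (n : ℕ) :
    casoratian x y z n = c ^ n * casoratian x y z 0 := by
  induction n with
  | zero => rw [pow_zero, one_mul]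
  | succ n ih =>
    rw [casoratian_succ (c := fun _ => c) hx hy hz, ih, pow_succ']
    ring

end Casoratian

theorem stmt16 {R : Type*} [CommRing R] (q : R)
    (P Q S : ℕ → R)
    (hP0 : P 0 = 1) (hP1 : P 1 = 1 - q) (hP2 : P 2 = 1 - q + q ^ 2 + q ^ 4)
    (hQ0 : Q 0 = 1) (hQ1 : Q 1 = 1) (hQ2 : Q 2 = 1 + q ^ 4)
    (hS0 : S 0 = 1) (hS1 : S 1 = 1 + q ^ 2) (hS2 : S 2 = 1 + q ^ 2 - q ^ 3)
    (hP : ∀ n : ℕ, P (n + 3) = (1 - q - q ^ 2) * P (n + 2) +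
      (q ^ (2 * (n + 3)) - q ^ 3 + q ^ 2 + q) * P (n + 1) + q ^ 3 * P n)
    (hQ : ∀ n : ℕ, Q (n + 3) = (1 - q - q ^ 2) * Q (n + 2) +
      (q ^ (2 * (n + 3)) - q ^ 3 + q ^ 2 + q) * Q (n + 1) + q ^ 3 * Q n)
    (hS : ∀ n : ℕ, S (n + 3) = (1 - q - q ^ 2) * S (n + 2) +
      (q ^ (2 * (n + 3)) - q ^ 3 + q ^ 2 + q) * S (n + 1) + q ^ 3 * S n) :
    (∀ m : ℕ,
        (Matrix.det !![P m, Q m, S m;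
                       P (m + 1), Q (m + 1), S (m + 1);
                       P (m + 2), Q (m + 2), S (m + 2)]) = -q ^ (3 * m + 5)) ∧
      (∀ m : ℕ, 1 ≤ m →
        (Matrix.det !![P (m - 1), Q (m - 1), S (m - 1);
                       P m, Q m, S m;
                       P (m + 1), Q (m + 1), S (m + 1)]) = -q ^ (3 * m + 2)) := by
  have initial : casoratian P Q S 0 = -q ^ 5 := by
    rw [casoratian_eq, hP0, hP1, hP2, hQ0, hQ1, hQ2, hS0, hS1, hS2]
    ring
  have casoratian_PQS (m : ℕ) : casoratian P Q S m = -q ^ (3 * m + 5) := by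
    rw [casoratian_eq_pow_mul hP hQ hS, initial]
    ring
  refine ⟨casoratian_PQS, fun m hm => ?_⟩
  obtain ⟨k, rfl⟩ := Nat.exists_eq_add_of_le' hm
  rw [Nat.add_sub_cancel, show 3 * (k + 1) + 2 = 3 * k + 5 by ring]
  exact casoratian_PQS k
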